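/- Suppose P_G decomposes via the hyperplane a·x = 0. Then there exist fixed reals α, β with α+β > 0 such that every positive edge (i,j) has {a_i,a_j} = {α,β} and every negative edge (k,ℓ) has {a_k,a_ℓ} = {-α,-β}. Moreover one can modify a, without changing the decomposition, so that all coordinates a_i lie in {0,1,-1}. -/

import Mathlib

/-
Let `Q` be the half `P_G ∩ {a·x ≥ 0}`. As `P_G` lies in the unit cube, every lattice point of
`P_G` is a vertex of the cube, hence an extreme point of `P_G`, hence some `ρ(i,j)`. So integrality
of `Q` makes its face `Q ∩ {a·x = 0}` the convex hull of the `ρ`'s of zero edges. For a positive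
edge `ij` and a negative edge `kl`, the segment from `ρ(i,j)` to `ρ(k,l)` crosses the hyperplane at
a point `p` supported on `{i,j,k,l}`; writing `p` through zero edges gives every vertex of
`{i,j,k,l}` a zero-edge partner in the other edge, whence `{a_k, a_l} = {-a_i, -a_j}`.
With `0 < α = max α β`, the normal `a'_t = [a_t = α] - [a_t = -α]` satisfies
`a'_i + a'_j = r (a_i + a_j)` on every edge for one `r > 0`, so it cuts `P_G` into the same halves.
-/

open scoped BigOperators

/-- `ρ(i,j) = e_i + e_j` -/
noncomputable def rho {d : ℕ} (i j : Fin d) : Fin d → ℝ :=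
  fun t => (if t = i then 1 else 0) + (if t = j then 1 else 0)

/-- The edge polytope of a graph `G` on `[d]`. -/
noncomputable def edgePolytope {d : ℕ} (G : SimpleGraph (Fin d)) : Set (Fin d → ℝ) :=
  convexHull ℝ {x | ∃ i j, G.Adj i j ∧ x = rho i j}

/-- dot product -/
def dotp {d : ℕ} (a x : Fin d → ℝ) : ℝ := ∑ t, a t * x t

/-- a polytope is integral if all its vertices (extreme points) are lattice points -/
def IsIntegralSet {d : ℕ} (P : Set (Fin d → ℝ)) : Prop :=
  ∀ x ∈ Set.extremePoints ℝ P, ∀ t, ∃ z : ℤ, x t = (z : ℝ)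

/-- The hyperplane `a·x = b` decomposes `P`: it meets the relative interior of `P`,
both open sides meet `P`, and both closed half-space pieces are integral. -/
def Decomposes {d : ℕ} (P : Set (Fin d → ℝ)) (a : Fin d → ℝ) (b : ℝ) : Prop :=
  (∃ x ∈ intrinsicInterior ℝ P, dotp a x = b) ∧
  (∃ y ∈ P, dotp a y < b) ∧ (∃ y ∈ P, b < dotp a y) ∧
  IsIntegralSet (P ∩ {x | b ≤ dotp a x}) ∧
  IsIntegralSet (P ∩ {x | dotp a x ≤ b})

lemma IsCompact.subset_convexHull_of_extremePoints_subset {E : Type*} [AddCommGroup E]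
    [Module ℝ E] [TopologicalSpace E] [T2Space E] [IsTopologicalAddGroup E] [ContinuousSMul ℝ E]
    [LocallyConvexSpace ℝ E] {K T : Set E} (hK : IsCompact K) (hKc : Convex ℝ K)
    (hT : T.Finite) (h : K.extremePoints ℝ ⊆ T) : K ⊆ convexHull ℝ T := by
  rw [← closure_convexHull_extremePoints hK hKc]
  exact closure_minimal (convexHull_mono h) (hT.isCompact_convexHull (𝕜 := ℝ)).isClosed

lemma isExtreme_inter_setOf_eq_zero {E : Type*} [AddCommGroup E] [Module ℝ E] {f : E →ₗ[ℝ] ℝ}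
    {A : Set E} (hA : ∀ x ∈ A, 0 ≤ f x) : IsExtreme ℝ A (A ∩ {x | f x = 0}) := by
  refine ⟨Set.inter_subset_left, fun x₁ hx₁ x₂ hx₂ x ⟨_, hx⟩ ⟨s, t, hs, ht, _, hsum⟩ => ?_⟩
  have h := congrArg f hsum
  rw [map_add, map_smul, map_smul, hx, smul_eq_mul, smul_eq_mul] at h
  have h₁ := hA x₁ hx₁
  have h₂ := hA x₂ hx₂
  exact ⟨hx₁, show f x₁ = 0 by nlinarith⟩

section EdgePolytope

variable {d : ℕ}

noncomputable def dotpLinear (a : Fin d → ℝ) : (Fin d → ℝ) →ₗ[ℝ] ℝ :=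
  dotProductBilin ℝ ℝ a

@[simp] lemma dotpLinear_apply (a x : Fin d → ℝ) : dotpLinear a x = dotp a x := rfl

lemma isLinearMap_dotp (a : Fin d → ℝ) : IsLinearMap ℝ (dotp a) := (dotpLinear a).isLinear

lemma continuous_dotp (a : Fin d → ℝ) : Continuous (dotp a) :=
  (dotpLinear a).continuous_of_finiteDimensional

lemma dotp_rho (a : Fin d → ℝ) (i j : Fin d) : dotp a (rho i j) = a i + a j := by
  simp [dotp, rho, mul_add, Finset.sum_add_distrib]

lemma rho_nonneg (i j t : Fin d) : 0 ≤ rho i j t := by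
  unfold rho; positivity

lemma rho_pos_iff {i j t : Fin d} : 0 < rho i j t ↔ t = i ∨ t = j := by
  unfold rho; split_ifs <;> simp_all

lemma rho_mem_Icc {i j : Fin d} (h : i ≠ j) : rho i j ∈ Set.Icc 0 1 := by
  refine ⟨fun t => ?_, fun t => ?_⟩ <;> simp only [rho, Pi.zero_apply, Pi.one_apply] <;>
    split_ifs <;> simp_all

variable {G : SimpleGraph (Fin d)}

lemma finite_setOf_adj_rho (G : SimpleGraph (Fin d)) :
    {x | ∃ i j, G.Adj i j ∧ x = rho i j}.Finite :=
  (Set.finite_range fun p : Fin d × Fin d => rho p.1 p.2).subset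
    fun _ ⟨i, j, _, hx⟩ => ⟨(i, j), hx.symm⟩

lemma isCompact_edgePolytope : IsCompact (edgePolytope G) :=
  (finite_setOf_adj_rho G).isCompact_convexHull (𝕜 := ℝ)

lemma convex_edgePolytope : Convex ℝ (edgePolytope G) := convex_convexHull ℝ _

lemma rho_mem_edgePolytope {i j : Fin d} (h : G.Adj i j) : rho i j ∈ edgePolytope G :=
  subset_convexHull ℝ _ ⟨i, j, h, rfl⟩

lemma edgePolytope_subset_Icc : edgePolytope G ⊆ Set.Icc 0 1 :=
  convexHull_min (fun _ ⟨_, _, h, hx⟩ => hx ▸ rho_mem_Icc h.ne) (convex_Icc 0 1)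

lemma mem_extremePoints_Icc_of_forall_eq_intCast {x : Fin d → ℝ} (hx : x ∈ Set.Icc 0 1)
    (hint : ∀ t, ∃ z : ℤ, x t = z) : x ∈ Set.extremePoints ℝ (Set.Icc 0 1) := by
  rw [← Set.pi_univ_Icc, extremePoints_pi]
  intro t _
  obtain ⟨z, hz⟩ := hint t
  have h0 : (0 : ℝ) ≤ z := hz ▸ hx.1 t
  have h1 : (z : ℝ) ≤ 1 := hz ▸ hx.2 t
  simp only [Pi.zero_apply, Pi.one_apply, Set.extremePoints_Icc zero_le_one, hz]
  obtain rfl | rfl : z = 0 ∨ z = 1 := by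
    have : (0 : ℤ) ≤ z := by exact_mod_cast h0
    have : z ≤ 1 := by exact_mod_cast h1
    omega
  all_goals simp

lemma exists_adj_eq_rho_of_forall_eq_intCast {x : Fin d → ℝ} (hx : x ∈ edgePolytope G)
    (hint : ∀ t, ∃ z : ℤ, x t = z) : ∃ i j, G.Adj i j ∧ x = rho i j :=
  extremePoints_convexHull_subset (A := {x | ∃ i j, G.Adj i j ∧ x = rho i j}) <|
    inter_extremePoints_subset_extremePoints_of_subset edgePolytope_subset_Icc
      ⟨hx, mem_extremePoints_Icc_of_forall_eq_intCast (edgePolytope_subset_Icc hx) hint⟩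

def zeroEdgeGraph (G : SimpleGraph (Fin d)) (a : Fin d → ℝ) : SimpleGraph (Fin d) where
  Adj i j := G.Adj i j ∧ a i + a j = 0
  symm := ⟨fun _ _ h => ⟨h.1.symm, (add_comm _ _).trans h.2⟩⟩
  loopless := ⟨fun _ h => G.irrefl h.1⟩

@[simp] lemma zeroEdgeGraph_adj {a : Fin d → ℝ} {i j : Fin d} :
    (zeroEdgeGraph G a).Adj i j ↔ G.Adj i j ∧ a i + a j = 0 := Iff.rfl

lemma mem_edgePolytope_zeroEdgeGraph {a : Fin d → ℝ}
    (hint : IsIntegralSet (edgePolytope G ∩ {x | 0 ≤ dotp a x})) {p : Fin d → ℝ}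
    (hp : p ∈ edgePolytope G) (hp0 : dotp a p = 0) : p ∈ edgePolytope (zeroEdgeGraph G a) := by
  set F := edgePolytope G ∩ {x | 0 ≤ dotp a x} ∩ {x | dotpLinear a x = 0}
  have hface : IsExtreme ℝ (edgePolytope G ∩ {x | 0 ≤ dotp a x}) F :=
    isExtreme_inter_setOf_eq_zero fun x hx => hx.2
  have hcompact : IsCompact F :=
    (isCompact_edgePolytope.inter_right <| isClosed_le continuous_const (continuous_dotp a))
      |>.inter_right (isClosed_eq (continuous_dotp a) continuous_const)
  have hconvex : Convex ℝ F :=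
    (convex_edgePolytope.inter (convex_halfSpace_ge (isLinearMap_dotp a) 0)).inter
      (convex_hyperplane (isLinearMap_dotp a) 0)
  refine hcompact.subset_convexHull_of_extremePoints_subset hconvex (finite_setOf_adj_rho _)
    (fun x hx => ?_) ⟨⟨hp, hp0.ge⟩, hp0⟩
  obtain ⟨i, j, hij, rfl⟩ := exists_adj_eq_rho_of_forall_eq_intCast hx.1.1.1
    (hint _ (hface.extremePoints_subset_extremePoints hx))
  exact ⟨i, j, zeroEdgeGraph_adj.2 ⟨hij, (dotp_rho a i j).symm.trans hx.1.2⟩, rfl⟩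

lemma exists_adj_pos_of_mem_edgePolytope {H : SimpleGraph (Fin d)} {p : Fin d → ℝ}
    (hp : p ∈ edgePolytope H) {v : Fin d} (hv : 0 < p v) : ∃ u, H.Adj v u ∧ 0 < p u := by
  by_contra! h
  -- the functional `x_v - ∑_{p_t ≤ 0} x_t` is nonpositive on every edge of `H`, but positive at `p`
  set c : Fin d → ℝ := fun t => (if t = v then 1 else 0) - (if p t ≤ 0 then 1 else 0)
  have hc : ∀ x ∈ edgePolytope H, dotp c x ≤ 0 := by
    refine convexHull_min ?_ (convex_halfSpace_le (isLinearMap_dotp c) 0)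
    rintro _ ⟨i, j, hij, rfl⟩
    show dotp c (rho i j) ≤ 0
    rw [dotp_rho]
    rcases eq_or_ne i v with rfl | hi
    · simp [c, hij.ne.symm, hv.not_ge, h j hij]
    rcases eq_or_ne j v with rfl | hj
    · simp [c, hi, hv.not_ge, h i hij.symm]
    simp only [c, hi, hj, if_false]
    split_ifs <;> norm_num
  have hcp : p v ≤ dotp c p := by
    have := Finset.single_le_sum (f := fun t => c t * p t) (fun t _ => ?_) (Finset.mem_univ v)
    · simpa [c, hv.not_ge, dotp] using this
    by_cases hpt : p t ≤ 0
    · simp only [c, hpt, if_true]; split_ifs <;> nlinarith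
    · simp only [c, hpt, if_false]; split_ifs <;> nlinarith
  linarith [hc p hp]

lemma eq_neg_pair_of_add_eq_zero {x y z w : ℝ} (hx : x + z = 0 ∨ x + w = 0)
    (hy : y + z = 0 ∨ y + w = 0) (hz : z + x = 0 ∨ z + y = 0) (hw : w + x = 0 ∨ w + y = 0) :
    (z = -x ∧ w = -y) ∨ (z = -y ∧ w = -x) := by
  rcases hx with hx | hx <;> rcases hy with hy | hy <;> rcases hz with hz | hz <;>
    rcases hw with hw | hw <;>
    first
      | exact .inl ⟨by linarith, by linarith⟩
      | exact .inr ⟨by linarith, by linarith⟩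

lemma eq_neg_of_adj_pos_of_adj_neg {a : Fin d → ℝ}
    (hint : IsIntegralSet (edgePolytope G ∩ {x | 0 ≤ dotp a x}))
    {i j k l : Fin d} (hij : G.Adj i j) (hpos : 0 < a i + a j) (hkl : G.Adj k l)
    (hneg : a k + a l < 0) : (a k = -a i ∧ a l = -a j) ∨ (a k = -a j ∧ a l = -a i) := by
  set μ := a i + a j
  set ν := -(a k + a l)
  have hν : 0 < ν := neg_pos.2 hneg
  set p := (ν / (μ + ν)) • rho i j + (μ / (μ + ν)) • rho k l
  have hpP : p ∈ edgePolytope G :=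
    convex_edgePolytope (rho_mem_edgePolytope hij) (rho_mem_edgePolytope hkl)
      (by positivity) (by positivity) (by field_simp; ring)
  have hp0 : dotp a p = 0 := by
    simp only [p, ← dotpLinear_apply, map_add, map_smul, smul_eq_mul]
    simp only [dotpLinear_apply, dotp_rho]
    field_simp
    ring
  have hsupp : ∀ t, 0 < p t ↔ (t = i ∨ t = j) ∨ (t = k ∨ t = l) := by
    intro t
    have h₁ := rho_nonneg i j t
    have h₂ := rho_nonneg k l t
    have hs : 0 < ν / (μ + ν) := by positivity
    have ht : 0 < μ / (μ + ν) := by positivity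
    simp only [p, Pi.add_apply, Pi.smul_apply, smul_eq_mul, ← rho_pos_iff]
    constructor
    · intro h
      by_contra! h'
      nlinarith
    · rintro (h | h) <;> nlinarith
  have partner : ∀ v, 0 < p v →
      ∃ u, G.Adj v u ∧ a v + a u = 0 ∧ ((u = i ∨ u = j) ∨ (u = k ∨ u = l)) := fun v hv =>
    let ⟨u, hvu, hpu⟩ :=
      exists_adj_pos_of_mem_edgePolytope (mem_edgePolytope_zeroEdgeGraph hint hpP hp0) hv
    ⟨u, (zeroEdgeGraph_adj.1 hvu).1, (zeroEdgeGraph_adj.1 hvu).2, (hsupp u).1 hpu⟩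
  have hi : a i + a k = 0 ∨ a i + a l = 0 := by
    obtain ⟨u, hiu, hu, (rfl | rfl) | rfl | rfl⟩ := partner i ((hsupp i).2 (by simp))
    exacts [(hiu.ne rfl).elim, absurd hu hpos.ne', .inl hu, .inr hu]
  have hj : a j + a k = 0 ∨ a j + a l = 0 := by
    obtain ⟨u, hju, hu, (rfl | rfl) | rfl | rfl⟩ := partner j ((hsupp j).2 (by simp))
    exacts [absurd hu (by linarith), (hju.ne rfl).elim, .inl hu, .inr hu]
  have hk : a k + a i = 0 ∨ a k + a j = 0 := by
    obtain ⟨u, hku, hu, (rfl | rfl) | rfl | rfl⟩ := partner k ((hsupp k).2 (by simp))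
    exacts [.inl hu, .inr hu, (hku.ne rfl).elim, absurd hu (by linarith)]
  have hl : a l + a i = 0 ∨ a l + a j = 0 := by
    obtain ⟨u, hlu, hu, (rfl | rfl) | rfl | rfl⟩ := partner l ((hsupp l).2 (by simp))
    exacts [.inl hu, .inr hu, absurd hu (by linarith), (hlu.ne rfl).elim]
  exact eq_neg_pair_of_add_eq_zero hi hj hk hl

lemma exists_adj_dotp_le_add {a y : Fin d → ℝ} (hy : y ∈ edgePolytope G) :
    ∃ i j, G.Adj i j ∧ dotp a y ≤ a i + a j := by
  obtain ⟨_, ⟨i, j, hij, rfl⟩, h⟩ :=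
    ((dotpLinear a).convexOn convex_univ).exists_ge_of_mem_convexHull (Set.subset_univ _) hy
  exact ⟨i, j, hij, (dotp_rho a i j) ▸ h⟩

lemma exists_adj_add_le_dotp {a y : Fin d → ℝ} (hy : y ∈ edgePolytope G) :
    ∃ i j, G.Adj i j ∧ a i + a j ≤ dotp a y := by
  obtain ⟨_, ⟨i, j, hij, rfl⟩, h⟩ :=
    ((dotpLinear a).concaveOn convex_univ).exists_le_of_mem_convexHull (Set.subset_univ _) hy
  exact ⟨i, j, hij, (dotp_rho a i j) ▸ h⟩

lemma Decomposes.exists_signature {a : Fin d → ℝ} (hdec : Decomposes (edgePolytope G) a 0) :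
    ∃ α β : ℝ, 0 < α + β ∧
      (∀ i j, G.Adj i j → 0 < a i + a j →
        ((a i = α ∧ a j = β) ∨ (a i = β ∧ a j = α))) ∧
      (∀ k l, G.Adj k l → a k + a l < 0 →
        ((a k = -α ∧ a l = -β) ∨ (a k = -β ∧ a l = -α))) := by
  obtain ⟨-, ⟨y, hy, hya⟩, ⟨z, hz, hza⟩, hint, -⟩ := hdec
  obtain ⟨i₀, j₀, hij₀, hpos₀⟩ := exists_adj_dotp_le_add (a := a) hz
  obtain ⟨k₀, l₀, hkl₀, hneg₀⟩ := exists_adj_add_le_dotp (a := a) hy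
  replace hpos₀ : 0 < a i₀ + a j₀ := hza.trans_le hpos₀
  replace hneg₀ : a k₀ + a l₀ < 0 := hneg₀.trans_lt hya
  refine ⟨a i₀, a j₀, hpos₀, fun i j hij hpos => ?_,
    fun k l hkl hneg => eq_neg_of_adj_pos_of_adj_neg hint hij₀ hpos₀ hkl hneg⟩
  rcases eq_neg_of_adj_pos_of_adj_neg hint hij hpos hkl₀ hneg₀ with ⟨h₁, h₂⟩ | ⟨h₁, h₂⟩ <;>
    rcases eq_neg_of_adj_pos_of_adj_neg hint hij₀ hpos₀ hkl₀ hneg₀ with ⟨h₃, h₄⟩ | ⟨h₃, h₄⟩ <;>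
    first
      | exact .inl ⟨by linarith, by linarith⟩
      | exact .inr ⟨by linarith, by linarith⟩

lemma exists_ternary_normal {a : Fin d → ℝ} {α β : ℝ} (hαβ : 0 < α + β)
    (hpos : ∀ i j, G.Adj i j → 0 < a i + a j → ((a i = α ∧ a j = β) ∨ (a i = β ∧ a j = α)))
    (hneg : ∀ k l, G.Adj k l → a k + a l < 0 →
      ((a k = -α ∧ a l = -β) ∨ (a k = -β ∧ a l = -α))) :
    ∃ a' : Fin d → ℝ, (∀ t, a' t = 0 ∨ a' t = 1 ∨ a' t = -1) ∧
      ∃ r, 0 < r ∧ ∀ i j, G.Adj i j → a' i + a' j = r * (a i + a j) := by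
  wlog hβα : β ≤ α generalizing α β
  · exact this (by linarith) (fun i j hij h => (hpos i j hij h).symm)
      (fun k l hkl h => (hneg k l hkl h).symm) (le_of_not_ge hβα)
  have hα : 0 < α := by linarith
  obtain ⟨φ, hφ⟩ : ∃ φ : ℝ → ℝ,
      φ = fun x => (if x = α then 1 else 0) - (if x = -α then 1 else 0) := ⟨_, rfl⟩
  have hφ_neg : ∀ x, φ (-x) = -φ x := by
    intro x
    simp only [hφ, neg_eq_iff_eq_neg, neg_neg]
    ring
  have hφα : φ α = 1 := by simp [hφ, (by linarith : α ≠ -α)]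
  have hφβ : 0 ≤ φ β := by
    simp only [hφ, (by linarith : β ≠ -α), if_false]
    split_ifs <;> norm_num
  obtain ⟨r, hr₀, hr⟩ : ∃ r, 0 < r ∧ r * (α + β) = φ α + φ β :=
    ⟨(φ α + φ β) / (α + β), div_pos (by linarith) hαβ, div_mul_cancel₀ _ hαβ.ne'⟩
  refine ⟨fun t => φ (a t), fun t => ?_, r, hr₀, fun i j hij => ?_⟩
  · simp only [hφ]
    split_ifs <;> norm_num
  show φ (a i) + φ (a j) = r * (a i + a j)
  rcases lt_trichotomy (a i + a j) 0 with h | h | h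
  · rcases hneg i j hij h with ⟨hi, hj⟩ | ⟨hi, hj⟩ <;>
      · rw [hi, hj, hφ_neg, hφ_neg]
        linear_combination hr
  · rw [h, eq_neg_of_add_eq_zero_right h, hφ_neg]
    ring
  · rcases hpos i j hij h with ⟨hi, hj⟩ | ⟨hi, hj⟩ <;>
      · rw [hi, hj]
        linear_combination -hr

lemma dotp_eq_mul_of_forall_adj {a a' : Fin d → ℝ} {r : ℝ}
    (h : ∀ i j, G.Adj i j → a' i + a' j = r * (a i + a j)) :
    ∀ x ∈ edgePolytope G, dotp a' x = r * dotp a x := by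
  have hconvex : Convex ℝ {x | dotp a' x = r * dotp a x} := by
    simpa [sub_eq_zero] using convex_hyperplane (dotpLinear a' - r • dotpLinear a).isLinear 0
  refine fun x hx => convexHull_min ?_ hconvex hx
  rintro _ ⟨i, j, hij, rfl⟩
  show dotp a' (rho i j) = r * dotp a (rho i j)
  rw [dotp_rho, dotp_rho, h i j hij]

section Rescale

variable {P : Set (Fin d → ℝ)} {a a' : Fin d → ℝ} {r : ℝ}

lemma inter_setOf_nonneg_dotp_eq (hr : 0 < r) (h : ∀ x ∈ P, dotp a' x = r * dotp a x) :
    P ∩ {x | 0 ≤ dotp a' x} = P ∩ {x | 0 ≤ dotp a x} :=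
  Set.ext fun x => and_congr_right fun hx => by
    show 0 ≤ dotp a' x ↔ 0 ≤ dotp a x
    rw [h x hx, mul_nonneg_iff_of_pos_left hr]

lemma inter_setOf_dotp_nonpos_eq (hr : 0 < r) (h : ∀ x ∈ P, dotp a' x = r * dotp a x) :
    P ∩ {x | dotp a' x ≤ 0} = P ∩ {x | dotp a x ≤ 0} :=
  Set.ext fun x => and_congr_right fun hx => by
    show dotp a' x ≤ 0 ↔ dotp a x ≤ 0
    simp [h x hx, mul_nonpos_iff_pos_imp_nonpos, hr, hr.le]

lemma Decomposes.of_dotp_eq_mul (hr : 0 < r) (h : ∀ x ∈ P, dotp a' x = r * dotp a x)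
    (hdec : Decomposes P a 0) : Decomposes P a' 0 := by
  obtain ⟨⟨x, hx, hx0⟩, ⟨y, hy, hy0⟩, ⟨z, hz, hz0⟩, hint₁, hint₂⟩ := hdec
  refine ⟨⟨x, hx, ?_⟩, ⟨y, hy, ?_⟩, ⟨z, hz, ?_⟩, ?_, ?_⟩
  · rw [h x (intrinsicInterior_subset hx), hx0, mul_zero]
  · rw [h y hy]
    exact mul_neg_of_pos_of_neg hr hy0
  · rw [h z hz]
    exact mul_pos hr hz0
  · rwa [inter_setOf_nonneg_dotp_eq hr h]
  · rwa [inter_setOf_dotp_nonpos_eq hr h]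

end Rescale

end EdgePolytope

theorem stmt7_general {d : ℕ} (G : SimpleGraph (Fin d)) (a : Fin d → ℝ)
    (hdec : Decomposes (edgePolytope G) a 0) :
    (∃ α β : ℝ, 0 < α + β ∧
      (∀ i j, G.Adj i j → 0 < a i + a j →
        ((a i = α ∧ a j = β) ∨ (a i = β ∧ a j = α))) ∧
      (∀ k l, G.Adj k l → a k + a l < 0 →
        ((a k = -α ∧ a l = -β) ∨ (a k = -β ∧ a l = -α)))) ∧
    ∃ a' : Fin d → ℝ, (∀ t, a' t = 0 ∨ a' t = 1 ∨ a' t = -1) ∧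
      Decomposes (edgePolytope G) a' 0 ∧
      edgePolytope G ∩ {x | 0 ≤ dotp a' x} = edgePolytope G ∩ {x | 0 ≤ dotp a x} ∧
      edgePolytope G ∩ {x | dotp a' x ≤ 0} = edgePolytope G ∩ {x | dotp a x ≤ 0} := by
  obtain ⟨α, β, hαβ, hpos, hneg⟩ := hdec.exists_signature
  obtain ⟨a', ha', r, hr, hadj⟩ := exists_ternary_normal hαβ hpos hneg
  have hscale := dotp_eq_mul_of_forall_adj hadj
  exact ⟨⟨α, β, hαβ, hpos, hneg⟩, a', ha', hdec.of_dotp_eq_mul hr hscale,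
    inter_setOf_nonneg_dotp_eq hr hscale, inter_setOf_dotp_nonpos_eq hr hscale⟩

/-- in a decomposition via a hyperplane through the origin, all positive
edges share a common signature (α, β) with α + β > 0, all negative edges have signature
(-α, -β), and the normal vector may be renormalized to take values in {0, 1, -1}
without changing the decomposition. -/
theorem stmt7 {d : ℕ} (G : SimpleGraph (Fin d)) (hG : G.Connected) (a : Fin d → ℝ)
    (hdec : Decomposes (edgePolytope G) a 0) :
    (∃ α β : ℝ, 0 < α + β ∧
      (∀ i j, G.Adj i j → 0 < a i + a j →
        ((a i = α ∧ a j = β) ∨ (a i = β ∧ a j = α))) ∧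
      (∀ k l, G.Adj k l → a k + a l < 0 →
        ((a k = -α ∧ a l = -β) ∨ (a k = -β ∧ a l = -α)))) ∧
    ∃ a' : Fin d → ℝ, (∀ t, a' t = 0 ∨ a' t = 1 ∨ a' t = -1) ∧
      Decomposes (edgePolytope G) a' 0 ∧
      edgePolytope G ∩ {x | 0 ≤ dotp a' x} = edgePolytope G ∩ {x | 0 ≤ dotp a x} ∧
      edgePolytope G ∩ {x | dotp a' x ≤ 0} = edgePolytope G ∩ {x | dotp a x ≤ 0} :=
  stmt7_general G a hdec
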